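/- arXiv:1111.6616 — 7 statements merged into one kernel-verified Lean document; each statement's English description precedes it below -/
import Mathlib

section
/- Let Γ be a relational structure over a finite relational signature such that for every n ≥ 1 there exists an n-ary totally symmetric polymorphism of Γ. Then for every finite induced substructure S of Γ there is a homomorphism from the set structure P(S) to Γ. -/
/-- A relational signature: a set of relation symbols, each with an arity. -/
structure Signature where
  symbols : Type
  arity : symbols → ℕ

/-- A relational structure over the signature `σ`. -/
structure RelStruct (σ : Signature) where
  D : Type
  rel : ∀ s : σ.symbols, Set (Fin (σ.arity s) → D)

/-- `f` is a homomorphism from `A` to `B`. -/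
def IsHom {σ : Signature} (A B : RelStruct σ) (f : A.D → B.D) : Prop :=
  ∀ (s : σ.symbols) (t : Fin (σ.arity s) → A.D), t ∈ A.rel s → (fun i => f (t i)) ∈ B.rel s

/-- The bijection `e` is an automorphism of `Γ`. -/
def IsAuto {σ : Signature} (Γ : RelStruct σ) (e : Γ.D ≃ Γ.D) : Prop :=
  ∀ (s : σ.symbols) (t : Fin (σ.arity s) → Γ.D), t ∈ Γ.rel s ↔ (fun i => e (t i)) ∈ Γ.rel s

/-- An `n`-ary operation is totally symmetric if its value only depends on the set of
arguments. -/
def TotallySymmetric {D : Type} {n : ℕ} (f : (Fin n → D) → D) : Prop :=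
  ∀ x y : Fin n → D, Set.range x = Set.range y → f x = f y

/-- The `n`-ary operation `f` preserves the `m`-ary relation `R`. -/
def Preserves {D : Type} {n m : ℕ} (f : (Fin n → D) → D) (R : Set (Fin m → D)) : Prop :=
  ∀ t : Fin n → Fin m → D, (∀ i, t i ∈ R) → (fun j => f (fun i => t i j)) ∈ R

/-- A polymorphism of `Γ` is an operation preserving all relations of `Γ`. -/
def IsPolymorphism {σ : Signature} (Γ : RelStruct σ) {n : ℕ} (f : (Fin n → Γ.D) → Γ.D) : Prop :=
  ∀ s : σ.symbols, Preserves f (Γ.rel s)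

/-- The substructure of `Γ` induced on the subset `S` of its domain. -/
def induced {σ : Signature} (Γ : RelStruct σ) (S : Set Γ.D) : RelStruct σ where
  D := ↥S
  rel := fun s => {t | (fun i => (t i : Γ.D)) ∈ Γ.rel s}

/-- The set structure `P(B)`: the domain consists of all non-empty subsets of the domain
of `B`, and a tuple `(U_1, …, U_k)` is in `R^{P(B)}` iff for every `i` and every
`u ∈ U_i` there is a tuple `t ∈ R^B` with `t i = u` and `t j ∈ U_j` for all `j`. -/
def setStruct {σ : Signature} (B : RelStruct σ) : RelStruct σ where
  D := {U : Set B.D // U.Nonempty}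
  rel := fun s =>
    {U | ∀ (i : Fin (σ.arity s)) (u : B.D), u ∈ (U i).1 →
      ∃ t ∈ B.rel s, t i = u ∧ ∀ j, t j ∈ (U j).1}

/-
A totally symmetric `n`-ary operation `f` evaluates a non-empty set of at most `n` elements by
listing it with repetitions; so `U ↦ f(U)` is the candidate homomorphism `P(S) → Γ`. For a tuple
`(U_1, …, U_m)` in `R^{P(S)}`, pick for every pair `(j, u)` with `u ∈ U_j` a tuple of `R` through
`u` at position `j` that stays inside the `U`s. There are at most `m·|S| ≤ n` such tuples; written
as the rows of an `n × m` matrix, its `j`-th column lists exactly `U_j`, and `f` applied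
columnwise to rows of `R` gives a tuple of `R`.
-/

theorem exists_surjective_fin_of_card_le {α : Type*} [Finite α] [Nonempty α] {n : ℕ}
    (hn : Nat.card α ≤ n) : ∃ g : Fin n → α, Function.Surjective g :=
  ⟨Function.invFun (Fin.castLE hn ∘ Finite.equivFin α),
    Function.invFun_surjective ((Fin.castLE_injective hn).comp (Finite.equivFin α).injective)⟩

theorem Set.Nonempty.exists_range_eq_of_card_le {α : Type*} {U : Set α} [Finite U]
    (hU : U.Nonempty) {n : ℕ} (hn : Nat.card U ≤ n) : ∃ x : Fin n → α, Set.range x = U := by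
  have := hU.to_subtype
  obtain ⟨g, hg⟩ := exists_surjective_fin_of_card_le hn
  exact ⟨Subtype.val ∘ g, by rw [Set.range_comp, hg.range_eq, Set.image_univ, Subtype.range_coe]⟩

theorem card_sigma_le_mul_card {α : Type*} [Finite α] {m : ℕ} (U : Fin m → Set α) :
    Nat.card (Σ j, U j) ≤ m * Nat.card α :=
  calc Nat.card (Σ j, U j) = ∑ j, Nat.card (U j) := Nat.card_sigma
    _ ≤ ∑ _j : Fin m, Nat.card α := Finset.sum_le_sum fun j _ => Finite.card_subtype_le _
    _ = m * Nat.card α := by simp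

theorem exists_rows_of_forall_extends {α : Type*} {m n : ℕ} {R : Set (Fin m → α)}
    (U : Fin m → Set α) [Nonempty (Σ j, U j)] [∀ j, Finite (U j)]
    (hn : Nat.card (Σ j, U j) ≤ n)
    (hU : ∀ i, ∀ u ∈ U i, ∃ t ∈ R, t i = u ∧ ∀ j, t j ∈ U j) :
    ∃ T : Fin n → Fin m → α, (∀ k, T k ∈ R) ∧ ∀ j, Set.range (fun k => T k j) = U j := by
  choose w hwR hw_at hw_mem using hU
  let W : (Σ j, U j) → Fin m → α := fun p => w p.1 p.2 p.2.2
  obtain ⟨G, hG⟩ := exists_surjective_fin_of_card_le hn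
  refine ⟨W ∘ G, fun k => hwR _ _ _, fun j => ?_⟩
  refine Set.Subset.antisymm (Set.range_subset_iff.2 fun k => hw_mem _ _ _ j) fun u hu => ?_
  obtain ⟨k, hk⟩ := hG ⟨j, u, hu⟩
  exact ⟨k, show W (G k) j = u by rw [hk]; exact hw_at j u hu⟩

theorem TotallySymmetric.comp_mem_of_range_eq {α : Type*} {D : Type} {m n : ℕ}
    {f : (Fin n → D) → D} {R : Set (Fin m → D)} (hsym : TotallySymmetric f) (hf : Preserves f R)
    (φ : α → D) (T : Fin n → Fin m → α) (hT : ∀ k, φ ∘ T k ∈ R) (x : Fin m → Fin n → α)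
    (hx : ∀ j, Set.range (x j) = Set.range fun k => T k j) :
    (fun j => f (φ ∘ x j)) ∈ R := by
  have hcol : ∀ j, f (φ ∘ x j) = f fun k => φ (T k j) := fun j =>
    hsym _ _ (by rw [Set.range_comp, hx j, ← Set.range_comp]; rfl)
  rw [funext hcol]
  exact hf (fun k => φ ∘ T k) hT

theorem exists_isHom_setStruct {σ : Signature} (har : ∀ s : σ.symbols, 0 < σ.arity s)
    {B Γ : RelStruct σ} [Finite B.D] {φ : B.D → Γ.D} (hφ : IsHom B Γ φ)
    {n : ℕ} {f : (Fin n → Γ.D) → Γ.D} (hf : IsPolymorphism Γ f) (hsym : TotallySymmetric f)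
    (hcard : Nat.card B.D ≤ n) (harity : ∀ s, σ.arity s * Nat.card B.D ≤ n) :
    ∃ h : (setStruct B).D → Γ.D, IsHom (setStruct B) Γ h := by
  have hlist (U : (setStruct B).D) : ∃ x : Fin n → B.D, Set.range x = U.1 :=
    Set.Nonempty.exists_range_eq_of_card_le U.2 ((Finite.card_subtype_le _).trans hcard)
  choose x hx using hlist
  refine ⟨fun U => f (φ ∘ x U), fun s U hU => ?_⟩
  have : Nonempty (Σ j, (U j).1) := ⟨⟨⟨0, har s⟩, (U _).2.some, (U _).2.some_mem⟩⟩
  obtain ⟨T, hTR, hTcol⟩ := exists_rows_of_forall_extends (R := B.rel s) (fun j => (U j).1)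
    ((card_sigma_le_mul_card _).trans (harity s)) hU
  exact hsym.comp_mem_of_range_eq (hf s) φ T (fun k => hφ s _ (hTR k)) (fun j => x (U j))
    fun j => (hx (U j)).trans (hTcol j).symm

/-- If `Γ` is a structure over a finite relational signature (all arities positive) that
has totally symmetric polymorphisms of all arities `n ≥ 1`, then for every finite induced
substructure `S` of `Γ` there is a homomorphism from the set structure `P(S)` to `Γ`. -/
theorem stmt1 {σ : Signature} [Finite σ.symbols] (har : ∀ s : σ.symbols, 0 < σ.arity s)
    (Γ : RelStruct σ)
    (hpoly : ∀ n : ℕ, 1 ≤ n → ∃ f : (Fin n → Γ.D) → Γ.D,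
      IsPolymorphism Γ f ∧ TotallySymmetric f)
    (S : Set Γ.D) (hS : S.Finite) :
    ∃ h : (setStruct (induced Γ S)).D → Γ.D, IsHom (setStruct (induced Γ S)) Γ h := by
  have : Finite (induced Γ S).D := hS.to_subtype
  obtain ⟨M, hM⟩ := Finite.exists_le σ.arity
  obtain ⟨f, hf, hsym⟩ := hpoly ((M + 1) * Nat.card (induced Γ S).D + 1) (by omega)
  have hval : IsHom (induced Γ S) Γ Subtype.val := fun _ _ ht => ht
  exact exists_isHom_setStruct har hval hf hsym (by nlinarith) fun s => by nlinarith [hM s]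
end

section
/- Let Δ and Γ be relational structures over the same signature such that there exist homomorphisms f : Δ → Γ and g : Γ → Δ. Assume that Γ is a core (every endomorphism of Γ is an embedding) and that for every n, every orbit of the componentwise action of Aut(Γ) on n-tuples is primitive positive definable in Γ. Then for every n, the number of orbits of n-subsets of Γ is at most the number of orbits of n-subsets of Δ. -/
/-- An atomic formula over signature `σ` with variables from `V`: either a relational
atom `R(v_1, …, v_k)` or an equality atom `v = w`. -/
inductive Atom (σ : Signature) (V : Type) where
  | rel (s : σ.symbols) (vars : Fin (σ.arity s) → V) : Atom σ V
  | eq (x y : V) : Atom σ V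

/-- Satisfaction of an atomic formula in `Γ` under the valuation `v`. -/
def atomHolds {σ : Signature} (Γ : RelStruct σ) {V : Type} (v : V → Γ.D) :
    Atom σ V → Prop
  | .rel s vars => (fun i => v (vars i)) ∈ Γ.rel s
  | .eq x y => v x = v y

/-- A primitive positive formula with free variables `Fin n`: an existentially
quantified (over `Fin numEx` fresh variables) finite conjunction of atomic formulas. -/
structure PPFormula (σ : Signature) (n : ℕ) where
  numEx : ℕ
  atoms : List (Atom σ (Fin n ⊕ Fin numEx))

/-- Satisfaction of a primitive positive formula by a tuple `t` in `Γ`. -/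
def ppSat {σ : Signature} (Γ : RelStruct σ) {n : ℕ} (φ : PPFormula σ n)
    (t : Fin n → Γ.D) : Prop :=
  ∃ w : Fin φ.numEx → Γ.D, ∀ a ∈ φ.atoms, atomHolds Γ (Sum.elim t w) a

/-- The `n`-ary relation `R` is primitive positive definable in `Γ`. -/
def PPDefinable {σ : Signature} (Γ : RelStruct σ) {n : ℕ} (R : Set (Fin n → Γ.D)) : Prop :=
  ∃ φ : PPFormula σ n, ∀ t, t ∈ R ↔ ppSat Γ φ t

/-- The set of orbits of the action of `Aut(Γ)` on `n`-element subsets of the domain: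
each orbit is the collection of all images of a fixed `n`-element set under
automorphisms. -/
def subsetOrbits {σ : Signature} (Γ : RelStruct σ) (n : ℕ) : Set (Set (Set Γ.D)) :=
  {O | ∃ S : Set Γ.D, S.Finite ∧ S.ncard = n ∧
    O = {T | ∃ e : Γ.D ≃ Γ.D, IsAuto Γ e ∧ e '' S = T}}

/-- `e` is an embedding of `Γ` into itself: an isomorphism onto an induced
substructure. -/
def IsSelfEmbedding {σ : Signature} (Γ : RelStruct σ) (e : Γ.D → Γ.D) : Prop :=
  Function.Injective e ∧
    ∀ (s : σ.symbols) (t : Fin (σ.arity s) → Γ.D), t ∈ Γ.rel s ↔ (fun i => e (t i)) ∈ Γ.rel s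

/-- `Γ` is a core: every endomorphism of `Γ` is an embedding. -/
def IsCore {σ : Signature} (Γ : RelStruct σ) : Prop :=
  ∀ e : Γ.D → Γ.D, IsHom Γ Γ e → IsSelfEmbedding Γ e

/-!
Since every orbit of `Aut(Γ)` on tuples is pp-definable and homomorphisms preserve
pp-formulas, every endomorphism of `Γ` agrees on each finite set with some automorphism.
Hence `g` is injective on finite sets (as `f ∘ g` is), so `S ↦ g(S)` sends `n`-subsets of
`Γ` to `n`-subsets of `Δ`. On representatives of orbits this is injective: if an automorphism
`d` of `Δ` maps `g(S₁)` onto `g(S₂)`, the endomorphisms `f ∘ d ∘ g` and `f ∘ g` agree with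
automorphisms `e₁`, `e₂` of `Γ` on `S₁` resp. `S₂`, and `e₁(S₁) = f(g(S₂)) = e₂(S₂)`.
-/

variable {σ : Signature}

theorem isAuto_refl (Γ : RelStruct σ) : IsAuto Γ (Equiv.refl Γ.D) := fun _ _ => Iff.rfl

theorem IsAuto.trans {Γ : RelStruct σ} {e e' : Γ.D ≃ Γ.D} (h : IsAuto Γ e) (h' : IsAuto Γ e') :
    IsAuto Γ (e.trans e') := fun s t => (h s t).trans (h' s _)

theorem IsAuto.symm {Γ : RelStruct σ} {e : Γ.D ≃ Γ.D} (h : IsAuto Γ e) : IsAuto Γ e.symm :=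
  fun s t => by simpa using (h s fun i => e.symm (t i)).symm

theorem IsHom.comp {A B C : RelStruct σ} {g : B.D → C.D} {f : A.D → B.D} (hg : IsHom B C g)
    (hf : IsHom A B f) : IsHom A C (g ∘ f) := fun s t ht => hg s _ (hf s t ht)

theorem IsAuto.isHom {Γ : RelStruct σ} {e : Γ.D ≃ Γ.D} (h : IsAuto Γ e) : IsHom Γ Γ e :=
  fun s t => (h s t).1

theorem IsHom.ppSat_comp {A B : RelStruct σ} {h : A.D → B.D} (hh : IsHom A B h) {n : ℕ}
    {φ : PPFormula σ n} {t : Fin n → A.D} (ht : ppSat A φ t) : ppSat B φ (h ∘ t) := by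
  obtain ⟨w, hw⟩ := ht
  refine ⟨h ∘ w, fun a ha => ?_⟩
  have hval : Sum.elim (h ∘ t) (h ∘ w) = h ∘ Sum.elim t w := (Sum.comp_elim h t w).symm
  cases a with
  | rel s vars =>
    show (fun i => Sum.elim (h ∘ t) (h ∘ w) (vars i)) ∈ B.rel s
    rw [hval]
    exact hh s _ (hw _ ha)
  | eq x y =>
    show Sum.elim (h ∘ t) (h ∘ w) x = Sum.elim (h ∘ t) (h ∘ w) y
    rw [hval]
    exact congrArg h (hw _ ha)

def setOrbit (Γ : RelStruct σ) (S : Set Γ.D) : Set (Set Γ.D) :=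
  {T | ∃ e : Γ.D ≃ Γ.D, IsAuto Γ e ∧ e '' S = T}

theorem self_mem_setOrbit (Γ : RelStruct σ) (S : Set Γ.D) : S ∈ setOrbit Γ S :=
  ⟨Equiv.refl _, isAuto_refl Γ, Set.image_id S⟩

theorem setOrbit_image {Γ : RelStruct σ} {e : Γ.D ≃ Γ.D} (he : IsAuto Γ e) (S : Set Γ.D) :
    setOrbit Γ (e '' S) = setOrbit Γ S := by
  ext T
  constructor
  · rintro ⟨a, ha, rfl⟩
    exact ⟨e.trans a, he.trans ha, by rw [Equiv.coe_trans, Set.image_comp]⟩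
  · rintro ⟨a, ha, rfl⟩
    refine ⟨e.symm.trans a, he.symm.trans ha, ?_⟩
    rw [Equiv.coe_trans, Set.image_comp, Equiv.symm_image_image]

def OrbitsPPDefinable (Γ : RelStruct σ) : Prop :=
  ∀ (n : ℕ) (t : Fin n → Γ.D),
    PPDefinable Γ {x | ∃ e : Γ.D ≃ Γ.D, IsAuto Γ e ∧ (fun i => e (t i)) = x}

namespace OrbitsPPDefinable

variable {Γ : RelStruct σ}

theorem exists_isAuto_comp_eq (hΓ : OrbitsPPDefinable Γ) {h : Γ.D → Γ.D} (hh : IsHom Γ Γ h)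
    {n : ℕ} (t : Fin n → Γ.D) :
    ∃ e : Γ.D ≃ Γ.D, IsAuto Γ e ∧ e ∘ t = h ∘ t := by
  obtain ⟨φ, hφ⟩ := hΓ n t
  have ht : ppSat Γ φ t := (hφ t).1 ⟨Equiv.refl _, isAuto_refl Γ, rfl⟩
  exact (hφ (h ∘ t)).2 (hh.ppSat_comp ht)

theorem exists_isAuto_eqOn (hΓ : OrbitsPPDefinable Γ) {h : Γ.D → Γ.D} (hh : IsHom Γ Γ h)
    {S : Set Γ.D} (hS : S.Finite) :
    ∃ e : Γ.D ≃ Γ.D, IsAuto Γ e ∧ Set.EqOn e h S := by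
  obtain ⟨n, t, rfl⟩ := hS.fin_embedding
  obtain ⟨e, he, het⟩ := hΓ.exists_isAuto_comp_eq hh t
  exact ⟨e, he, by rintro _ ⟨i, rfl⟩; exact congrFun het i⟩

theorem injOn_of_isHom (hΓ : OrbitsPPDefinable Γ) {Δ : RelStruct σ} {f : Δ.D → Γ.D}
    {g : Γ.D → Δ.D} (hf : IsHom Δ Γ f) (hg : IsHom Γ Δ g) {S : Set Γ.D} (hS : S.Finite) :
    Set.InjOn g S := by
  obtain ⟨e, -, he⟩ := hΓ.exists_isAuto_eqOn (hf.comp hg) hS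
  exact (e.injective.injOn.congr he).of_comp

theorem setOrbit_eq_of_setOrbit_image_eq (hΓ : OrbitsPPDefinable Γ) {Δ : RelStruct σ}
    {f : Δ.D → Γ.D} {g : Γ.D → Δ.D} (hf : IsHom Δ Γ f) (hg : IsHom Γ Δ g) {S₁ S₂ : Set Γ.D}
    (hS₁ : S₁.Finite) (hS₂ : S₂.Finite) (h : setOrbit Δ (g '' S₁) = setOrbit Δ (g '' S₂)) :
    setOrbit Γ S₁ = setOrbit Γ S₂ := by
  obtain ⟨d, hd, hdS⟩ : g '' S₂ ∈ setOrbit Δ (g '' S₁) := h ▸ self_mem_setOrbit Δ _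
  obtain ⟨e₁, he₁, heq₁⟩ := hΓ.exists_isAuto_eqOn (hf.comp (hd.isHom.comp hg)) hS₁
  obtain ⟨e₂, he₂, heq₂⟩ := hΓ.exists_isAuto_eqOn (hf.comp hg) hS₂
  have himage : e₁ '' S₁ = e₂ '' S₂ := by
    rw [heq₁.image_eq, heq₂.image_eq, Set.image_comp, Set.image_comp, hdS, Set.image_comp]
  rw [← setOrbit_image he₁ S₁, himage, setOrbit_image he₂ S₂]

end OrbitsPPDefinable

theorem stmt3_general {σ : Signature}
    (Δ Γ : RelStruct σ)
    (f : Δ.D → Γ.D) (g : Γ.D → Δ.D) (hf : IsHom Δ Γ f) (hg : IsHom Γ Δ g)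
    (horb : ∀ (n : ℕ) (t : Fin n → Γ.D),
      PPDefinable Γ {x | ∃ e : Γ.D ≃ Γ.D, IsAuto Γ e ∧ (fun i => e (t i)) = x})
    (n : ℕ) :
    Cardinal.mk ↥(subsetOrbits Γ n) ≤ Cardinal.mk ↥(subsetOrbits Δ n) := by
  have hΓ : OrbitsPPDefinable Γ := horb
  choose S hS hScard hO using fun O : subsetOrbits Γ n => O.2
  have hmem (O : subsetOrbits Γ n) : setOrbit Δ (g '' S O) ∈ subsetOrbits Δ n :=
    ⟨g '' S O, (hS O).image g, ((hΓ.injOn_of_isHom hf hg (hS O)).ncard_image).trans (hScard O),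
      rfl⟩
  refine Cardinal.mk_le_of_injective (f := fun O => ⟨_, hmem O⟩) fun O₁ O₂ h => Subtype.ext ?_
  rw [hO O₁, hO O₂]
  exact hΓ.setOrbit_eq_of_setOrbit_image_eq hf hg (hS O₁) (hS O₂) (congrArg Subtype.val h)

/-- If `Δ` and `Γ` are homomorphically equivalent, `Γ` is a core, and every orbit of the
componentwise action of `Aut(Γ)` on `n`-tuples is primitive positive definable in `Γ`,
then for every `n` the number of orbits of `n`-subsets of `Γ` is at most the number of
orbits of `n`-subsets of `Δ`. -/
theorem stmt3 {σ : Signature} (har : ∀ s : σ.symbols, 0 < σ.arity s)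
    (Δ Γ : RelStruct σ)
    (f : Δ.D → Γ.D) (g : Γ.D → Δ.D) (hf : IsHom Δ Γ f) (hg : IsHom Γ Δ g)
    (hcore : IsCore Γ)
    (horb : ∀ (n : ℕ) (t : Fin n → Γ.D),
      PPDefinable Γ {x | ∃ e : Γ.D ≃ Γ.D, IsAuto Γ e ∧ (fun i => e (t i)) = x})
    (n : ℕ) :
    Cardinal.mk ↥(subsetOrbits Γ n) ≤ Cardinal.mk ↥(subsetOrbits Δ n) :=
  stmt3_general Δ Γ f g hf hg horb n
end

section
/- Let Γ be a relational structure of sub-exponential growth, let U and V be two orbits of the action of Aut(Γ) on the domain, and let < be a linear order on U ∪ V that is preserved by every automorphism of Γ. Then U and V are convex with respect to <, i.e., there do not exist u_1, u_2 ∈ U and v ∈ V with u_1 < v < u_2, and symmetrically with the roles of U and V exchanged. -/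
/-- `Γ` has exponential growth: there is a real `c > 1` such that for all sufficiently
large `n`, the number of orbits of `n`-subsets of `Γ` is at least `c ^ n`. -/
def ExpGrowth {σ : Signature} (Γ : RelStruct σ) : Prop :=
  ∃ c : ℝ, 1 < c ∧ ∃ N : ℕ, ∀ n ≥ N,
    (⌈c ^ n⌉₊ : Cardinal) ≤ Cardinal.mk ↥(subsetOrbits Γ n)

/-- The orbit of the element `a` under `Aut(Γ)`. -/
def orbitOf {σ : Signature} (Γ : RelStruct σ) (a : Γ.D) : Set Γ.D :=
  {x | ∃ e : Γ.D ≃ Γ.D, IsAuto Γ e ∧ e a = x}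

/-- `U` is an orbit of the action of `Aut(Γ)` on the domain. -/
def IsOrbit {σ : Signature} (Γ : RelStruct σ) (U : Set Γ.D) : Prop :=
  ∃ a : Γ.D, U = orbitOf Γ a

/-!
If `u₁ < v < u₂` with `uᵢ ∈ U` and `v ∈ V`, an automorphism `e` with `e u₁ = u₂` produces the
increasing chain `u₁ < v < e u₁ < e v < e² u₁ < ⋯`, alternating between `U` and `V`. A word
`p ∈ {0,1}ⁿ` selects one element from each of the first `n` pairs `(eⁱ u₁, eⁱ v)`. An automorphism
carrying the selected set of `p` onto that of `q` preserves the order, so it maps the `i`-th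
element to the `i`-th element; it also preserves `U` and `V`, hence `p = q`. Thus there are at
least `2ⁿ` orbits of `n`-subsets.
-/

open Function Set

section Automorphisms

variable {σ : Signature}

def autGroup (Γ : RelStruct σ) : Subgroup (Equiv.Perm Γ.D) where
  carrier := {e | IsAuto Γ e}
  mul_mem' {e f} he hf s t := (hf s t).trans (he s fun i => f (t i))
  one_mem' _ _ := Iff.rfl
  inv_mem' {e} he s t := by simpa using (he s fun i => e.symm (t i)).symm

variable {Γ : RelStruct σ}

lemma orbitOf_eq_orbit (a : Γ.D) : orbitOf Γ a = MulAction.orbit (autGroup Γ) a := by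
  ext x
  exact ⟨fun ⟨e, he, hx⟩ => ⟨⟨e, he⟩, hx⟩, fun ⟨e, hx⟩ => ⟨e, e.2, hx⟩⟩

namespace IsOrbit

variable {U V : Set Γ.D}

lemma apply_mem_iff (hU : IsOrbit Γ U) {e : Γ.D ≃ Γ.D} (he : IsAuto Γ e) {x : Γ.D} :
    e x ∈ U ↔ x ∈ U := by
  obtain ⟨a, rfl⟩ := hU
  have hex : e x = (⟨e, he⟩ : autGroup Γ) • x := rfl
  rw [orbitOf_eq_orbit, hex, ← MulAction.orbit_eq_iff, ← MulAction.orbit_eq_iff,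
    MulAction.orbit_smul]

lemma exists_apply_eq (hU : IsOrbit Γ U) {x y : Γ.D} (hx : x ∈ U) (hy : y ∈ U) :
    ∃ e : Γ.D ≃ Γ.D, IsAuto Γ e ∧ e x = y := by
  obtain ⟨a, rfl⟩ := hU
  rw [orbitOf_eq_orbit, ← MulAction.orbit_eq_iff] at hx hy
  change y ∈ orbitOf Γ x
  rw [orbitOf_eq_orbit, ← MulAction.orbit_eq_iff, hx, hy]

lemma disjoint (hU : IsOrbit Γ U) (hV : IsOrbit Γ V) (hUV : U ≠ V) : Disjoint U V := by
  obtain ⟨a, rfl⟩ := hU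
  obtain ⟨b, rfl⟩ := hV
  rw [orbitOf_eq_orbit, orbitOf_eq_orbit] at hUV ⊢
  exact (MulAction.orbit.eq_or_disjoint a b).resolve_left hUV

end IsOrbit

end Automorphisms

section Chains

variable {α : Type*} {r : α → α → Prop}

lemma rel_iff_lt_of_rel_succ {W : Set α} (hirrefl : ∀ x ∈ W, ¬ r x x)
    (htrans : ∀ x ∈ W, ∀ y ∈ W, ∀ z ∈ W, r x y → r y z → r x z)
    {w : ℕ → α} (hW : ∀ m, w m ∈ W) (hsucc : ∀ m, r (w m) (w (m + 1))) {i j : ℕ} :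
    r (w i) (w j) ↔ i < j := by
  have : IsTrans ℕ fun i j => r (w i) (w j) :=
    ⟨fun i j k => htrans _ (hW i) _ (hW j) _ (hW k)⟩
  have hlt {i j : ℕ} (h : i < j) : r (w i) (w j) :=
    Nat.rel_of_forall_rel_succ_of_lt (fun i j => r (w i) (w j)) hsucc h
  refine ⟨fun h => ?_, hlt⟩
  by_contra! hji
  obtain rfl | hji := hji.eq_or_lt
  · exact hirrefl _ (hW _) h
  · exact hirrefl _ (hW i) (htrans _ (hW i) _ (hW j) _ (hW i) h (hlt hji))

lemma comp_eq_of_image_range_eq {n : ℕ} {a b : Fin n → α}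
    (ha : ∀ i j, r (a i) (a j) ↔ i < j) (hb : ∀ i j, r (b i) (b j) ↔ i < j) {f : α → α}
    (hf : ∀ i j, r (a i) (a j) → r (f (a i)) (f (a j))) (himg : f '' range a = range b) :
    f ∘ a = b := by
  have hφ (i : Fin n) : f (a i) ∈ range b := himg ▸ mem_image_of_mem f (mem_range_self i)
  choose φ hφ using hφ
  have hmono : StrictMono φ := fun i j hij => by
    rw [← hb, hφ, hφ]
    exact hf i j ((ha i j).2 hij)
  funext i
  rw [comp_apply, ← hφ, hmono.apply_eq]

def zigzag (e : α → α) (x y : α) : ℕ → α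
  | 0 => x
  | 1 => y
  | m + 2 => e (zigzag e x y m)

variable {e : α → α} {x y : α}

lemma zigzag_mem {U V : Set α} (hU : MapsTo e U U) (hV : MapsTo e V V) (hx : x ∈ U) (hy : y ∈ V) :
    ∀ k, zigzag e x y (2 * k) ∈ U ∧ zigzag e x y (2 * k + 1) ∈ V
  | 0 => ⟨hx, hy⟩
  | k + 1 => ⟨hU (zigzag_mem hU hV hx hy k).1, hV (zigzag_mem hU hV hx hy k).2⟩

lemma zigzag_rel_succ {W : Set α} (hW : ∀ m, zigzag e x y m ∈ W)
    (he : ∀ a ∈ W, ∀ b ∈ W, r a b → r (e a) (e b)) (hxy : r x y) (hyx : r y (e x)) :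
    ∀ m, r (zigzag e x y m) (zigzag e x y (m + 1))
  | 0 => hxy
  | 1 => hyx
  | m + 2 => he _ (hW m) _ (hW (m + 1)) (zigzag_rel_succ hW he hxy hyx m)

end Chains

section Patterns

variable {α : Type*} {r : α → α → Prop}

lemma injective_of_rel_iff_lt {ι : Type*} [LinearOrder ι] {w : ι → α}
    (hw : ∀ i j, r (w i) (w j) ↔ i < j) : Injective w := by
  intro i j hij
  by_contra hne
  rcases lt_or_gt_of_ne hne with h | h
  · exact lt_irrefl j ((hw j j).1 (hij ▸ (hw i j).2 h))
  · exact lt_irrefl i ((hw i i).1 (hij ▸ (hw j i).2 h))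

def patternIndex {n : ℕ} (p : Fin n → Bool) (i : Fin n) : ℕ := 2 * i + (p i).toNat

lemma strictMono_patternIndex {n : ℕ} (p : Fin n → Bool) : StrictMono (patternIndex p) := by
  intro i j hij
  have := Bool.toNat_le (p i)
  have : (i : ℕ) < j := hij
  simp only [patternIndex]
  omega

lemma odd_patternIndex {n : ℕ} (p : Fin n → Bool) (i : Fin n) :
    Odd (patternIndex p i) ↔ p i = true := by
  unfold patternIndex
  cases p i <;> simp

lemma pattern_eq_of_image_eq {V : Set α} {w : ℕ → α} (hw : ∀ i j, r (w i) (w j) ↔ i < j)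
    (hV : ∀ m, w m ∈ V ↔ Odd m) {f : α → α} (hf : ∀ i j, r (w i) (w j) → r (f (w i)) (f (w j)))
    (hfV : ∀ m, f (w m) ∈ V ↔ w m ∈ V) {n : ℕ} {p q : Fin n → Bool}
    (himg : f '' range (w ∘ patternIndex p) = range (w ∘ patternIndex q)) : p = q := by
  have hpat (p : Fin n → Bool) i j : r (w (patternIndex p i)) (w (patternIndex p j)) ↔ i < j :=
    (hw _ _).trans (strictMono_patternIndex p).lt_iff_lt
  have hfw := comp_eq_of_image_range_eq (hpat p) (hpat q) (fun i j => hf _ _) himg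
  funext i
  rw [Bool.eq_iff_iff, ← odd_patternIndex, ← odd_patternIndex, ← hV, ← hV, ← hfV,
    ← congrFun hfw i, comp_apply]

end Patterns

section Growth

variable {σ : Signature} {Γ : RelStruct σ}

lemma expGrowth_of_patterns (S : ∀ n, (Fin n → Bool) → Fin n → Γ.D)
    (hS : ∀ n p, Injective (S n p))
    (hdist : ∀ n p q (e : Γ.D ≃ Γ.D), IsAuto Γ e → e '' range (S n p) = range (S n q) → p = q) :
    ExpGrowth Γ := by
  refine ⟨2, one_lt_two, 0, fun n _ => ?_⟩
  let F : (Fin n → Bool) → subsetOrbits Γ n := fun p =>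
    ⟨_, range (S n p), finite_range _, by simp [ncard_range_of_injective (hS n p)], rfl⟩
  have hF : Injective F := by
    intro p q hpq
    have hq : range (S n q) ∈ (F p).1 := by
      rw [hpq]
      exact ⟨Equiv.refl _, fun _ _ => Iff.rfl, image_id _⟩
    obtain ⟨e, he, himg⟩ := hq
    exact hdist n p q e he himg
  calc
    (⌈(2 : ℝ) ^ n⌉₊ : Cardinal) = Cardinal.mk (Fin n → Bool) := by
      rw [show ⌈(2 : ℝ) ^ n⌉₊ = 2 ^ n by exact_mod_cast Nat.ceil_natCast (2 ^ n)]
      simp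
    _ ≤ _ := Cardinal.mk_le_of_injective hF

lemma expGrowth_of_not_convex {U V : Set Γ.D} (hU : IsOrbit Γ U) (hV : IsOrbit Γ V) (hUV : U ≠ V)
    {lt : Γ.D → Γ.D → Prop} (hirrefl : ∀ x ∈ U ∪ V, ¬ lt x x)
    (htrans : ∀ x ∈ U ∪ V, ∀ y ∈ U ∪ V, ∀ z ∈ U ∪ V, lt x y → lt y z → lt x z)
    (hpres : ∀ e : Γ.D ≃ Γ.D, IsAuto Γ e → ∀ x ∈ U ∪ V, ∀ y ∈ U ∪ V, lt x y → lt (e x) (e y))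
    (h : ∃ u₁ ∈ U, ∃ u₂ ∈ U, ∃ v ∈ V, lt u₁ v ∧ lt v u₂) : ExpGrowth Γ := by
  obtain ⟨u, hu, _, hu₂, v, hv, huv, hvu⟩ := h
  obtain ⟨e, he, rfl⟩ := hU.exists_apply_eq hu hu₂
  set w := zigzag e u v
  have hmem := zigzag_mem (fun _ => (hU.apply_mem_iff he).2) (fun _ => (hV.apply_mem_iff he).2)
    hu hv
  have hW (m : ℕ) : w m ∈ U ∪ V := by
    obtain ⟨k, rfl | rfl⟩ := Nat.even_or_odd' m
    exacts [Or.inl (hmem k).1, Or.inr (hmem k).2]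
  have hwV (m : ℕ) : w m ∈ V ↔ Odd m := by
    obtain ⟨k, rfl | rfl⟩ := Nat.even_or_odd' m
    · exact iff_of_false ((hU.disjoint hV hUV).notMem_of_mem_left (hmem k).1)
        (Nat.not_odd_iff_even.2 (even_two_mul k))
    · exact iff_of_true (hmem k).2 (odd_two_mul_add_one k)
  have hw (i j : ℕ) : lt (w i) (w j) ↔ i < j :=
    rel_iff_lt_of_rel_succ hirrefl htrans hW (zigzag_rel_succ hW (hpres e he) huv hvu)
  exact expGrowth_of_patterns (fun _ p => w ∘ patternIndex p)
    (fun _ p => (injective_of_rel_iff_lt hw).comp (strictMono_patternIndex p).injective)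
    (fun _ _ _ f hf => pattern_eq_of_image_eq hw hwV (fun i j => hpres f hf _ (hW i) _ (hW j))
      (fun _ => hV.apply_mem_iff hf))

end Growth

theorem stmt6_general {σ : Signature}
    (Γ : RelStruct σ) (hsub : ¬ ExpGrowth Γ)
    (U V : Set Γ.D) (hU : IsOrbit Γ U) (hV : IsOrbit Γ V) (hUV : U ≠ V)
    (lt : Γ.D → Γ.D → Prop)
    (hirrefl : ∀ x ∈ U ∪ V, ¬ lt x x)
    (htrans : ∀ x ∈ U ∪ V, ∀ y ∈ U ∪ V, ∀ z ∈ U ∪ V, lt x y → lt y z → lt x z)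
    (hpres : ∀ e : Γ.D ≃ Γ.D, IsAuto Γ e → ∀ x ∈ U ∪ V, ∀ y ∈ U ∪ V, lt x y → lt (e x) (e y)) :
    (¬ ∃ u₁ ∈ U, ∃ u₂ ∈ U, ∃ v ∈ V, lt u₁ v ∧ lt v u₂) ∧
    (¬ ∃ v₁ ∈ V, ∃ v₂ ∈ V, ∃ u ∈ U, lt v₁ u ∧ lt u v₂) := by
  refine ⟨fun h => hsub (expGrowth_of_not_convex hU hV hUV hirrefl htrans hpres h),
    fun h => hsub ?_⟩
  rw [union_comm] at hirrefl htrans hpres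
  exact expGrowth_of_not_convex hV hU hUV.symm hirrefl htrans hpres h

/-- If `Γ` has sub-exponential growth, `U ≠ V` are orbits of `Aut(Γ)` on the domain, and
`lt` is a linear order on `U ∪ V` preserved by all automorphisms of `Γ`, then `U` and `V`
are convex with respect to `lt`. -/
theorem stmt6 {σ : Signature} (har : ∀ s : σ.symbols, 0 < σ.arity s)
    (Γ : RelStruct σ) (hsub : ¬ ExpGrowth Γ)
    (U V : Set Γ.D) (hU : IsOrbit Γ U) (hV : IsOrbit Γ V) (hUV : U ≠ V)
    (lt : Γ.D → Γ.D → Prop)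
    (hirrefl : ∀ x ∈ U ∪ V, ¬ lt x x)
    (htrans : ∀ x ∈ U ∪ V, ∀ y ∈ U ∪ V, ∀ z ∈ U ∪ V, lt x y → lt y z → lt x z)
    (htotal : ∀ x ∈ U ∪ V, ∀ y ∈ U ∪ V, x = y ∨ lt x y ∨ lt y x)
    (hpres : ∀ e : Γ.D ≃ Γ.D, IsAuto Γ e → ∀ x ∈ U ∪ V, ∀ y ∈ U ∪ V, lt x y → lt (e x) (e y)) :
    (¬ ∃ u₁ ∈ U, ∃ u₂ ∈ U, ∃ v ∈ V, lt u₁ v ∧ lt v u₂) ∧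
    (¬ ∃ v₁ ∈ V, ∃ v₂ ∈ V, ∃ u ∈ U, lt v₁ u ∧ lt u v₂) :=
  stmt6_general Γ hsub U V hU hV hUV lt hirrefl htrans hpres
end

section
/- Let R and S be binary relations on a set D that are both preserved by a totally symmetric function f : D^n → D of arity n ≥ 1. If there is an alternating closed walk on R and S of length 2n, i.e., elements x_0, x_1, …, x_{2n} ∈ D with x_{2n} = x_0 such that (x_{2i}, x_{2i+1}) ∈ R and (x_{2i+1}, x_{2i+2}) ∈ S for all 0 ≤ i < n, then there exist y, z ∈ D with (y,z) ∈ R and (z,y) ∈ S. -/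
lemma TotallySymmetric.apply_comp_perm {D : Type} {n : ℕ} {f : (Fin n → D) → D}
    (hf : TotallySymmetric f) (a : Fin n → D) (σ : Equiv.Perm (Fin n)) : f (a ∘ σ) = f a :=
  hf _ _ (EquivLike.range_comp a σ)

theorem TotallySymmetric.exists_rel_flip_of_perm {D : Type} {n : ℕ} {R S : D → D → Prop}
    {f : (Fin n → D) → D} (hf : TotallySymmetric f)
    (hR : ∀ a b : Fin n → D, (∀ i, R (a i) (b i)) → R (f a) (f b))
    (hS : ∀ a b : Fin n → D, (∀ i, S (a i) (b i)) → S (f a) (f b))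
    (a b : Fin n → D) (σ : Equiv.Perm (Fin n))
    (hab : ∀ i, R (a i) (b i)) (hba : ∀ i, S (b i) (a (σ i))) :
    ∃ y z : D, R y z ∧ S z y :=
  ⟨f a, f b, hR a b hab, hf.apply_comp_perm a σ ▸ hS b (a ∘ σ) hba⟩

lemma apply_two_mul_finRotate {D : Type} {n : ℕ} (x : ℕ → D) (hclosed : x (2 * n) = x 0)
    (i : Fin n) : x (2 * finRotate n i) = x (2 * i + 2) := by
  cases n with
  | zero => exact i.elim0
  | succ m =>
    rw [coe_finRotate]
    split_ifs with hi
    · rw [hi, Fin.val_last, ← hclosed, Nat.mul_succ]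
    · rfl

theorem stmt8_general {D : Type} (n : ℕ) (R S : D → D → Prop)
    (f : (Fin n → D) → D) (hts : TotallySymmetric f)
    (hR : ∀ a b : Fin n → D, (∀ i, R (a i) (b i)) → R (f a) (f b))
    (hS : ∀ a b : Fin n → D, (∀ i, S (a i) (b i)) → S (f a) (f b))
    (x : ℕ → D) (hclosed : x (2 * n) = x 0)
    (hxR : ∀ i < n, R (x (2 * i)) (x (2 * i + 1)))
    (hxS : ∀ i < n, S (x (2 * i + 1)) (x (2 * i + 2))) :
    ∃ y z : D, R y z ∧ S z y :=
  hts.exists_rel_flip_of_perm hR hS (fun i => x (2 * i)) (fun i => x (2 * i + 1)) (finRotate n)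
    (fun i => hxR i i.isLt)
    (fun i => (apply_two_mul_finRotate x hclosed i).symm ▸ hxS i i.isLt)

/-- If the binary relations `R` and `S` are preserved by a totally symmetric `n`-ary
operation `f` (`n ≥ 1`), and there is an alternating closed walk on `R` and `S` of
length `2n`, then `R ∩ S⁻¹ ≠ ∅`. -/
theorem stmt8 {D : Type} (n : ℕ) (hn : 1 ≤ n) (R S : D → D → Prop)
    (f : (Fin n → D) → D) (hts : TotallySymmetric f)
    (hR : ∀ a b : Fin n → D, (∀ i, R (a i) (b i)) → R (f a) (f b))
    (hS : ∀ a b : Fin n → D, (∀ i, S (a i) (b i)) → S (f a) (f b))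
    (x : ℕ → D) (hclosed : x (2 * n) = x 0)
    (hxR : ∀ i < n, R (x (2 * i)) (x (2 * i + 1)))
    (hxS : ∀ i < n, S (x (2 * i + 1)) (x (2 * i + 2))) :
    ∃ y z : D, R y z ∧ S z y :=
  stmt8_general n R S f hts hR hS x hclosed hxR hxS
end

section
/- Let G be a group of permutations of the rationals ℚ that contains every order-preserving permutation of (ℚ, <). Suppose that for every n ≥ 1 there is a totally symmetric n-ary function f : ℚ^n → ℚ preserving every orbital of G. Then every element of G preserves the order <, and consequently G is exactly the group Aut(ℚ;<) of order-preserving permutations of ℚ. -/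
/-- The orbital of the pair `(a, b)` under the permutation group `G`: the orbit of the
componentwise action of `G` on ordered pairs. -/
def orbital {D : Type} (G : Subgroup (Equiv.Perm D)) (a b : D) : Set (D × D) :=
  {p | ∃ g ∈ G, g a = p.1 ∧ g b = p.2}

/-- The `n`-ary operation `f` preserves the binary relation `O ⊆ D × D`. -/
def PreservesPairs {D : Type} {n : ℕ} (f : (Fin n → D) → D) (O : Set (D × D)) : Prop :=
  ∀ a b : Fin n → D, (∀ i, (a i, b i) ∈ O) → (f a, f b) ∈ O

section Orbital

variable {D : Type} {G : Subgroup (Equiv.Perm D)}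

theorem mem_orbital_self (a b : D) : (a, b) ∈ orbital G a b :=
  ⟨1, G.one_mem, rfl, rfl⟩

theorem fst_ne_snd_of_mem_orbital {a b : D} (hab : a ≠ b) {p : D × D}
    (hp : p ∈ orbital G a b) : p.1 ≠ p.2 := by
  obtain ⟨g, -, h1, h2⟩ := hp
  exact h1 ▸ h2 ▸ g.injective.ne hab

end Orbital

theorem TotallySymmetric.apply_swap {D : Type} {f : (Fin 2 → D) → D} (hf : TotallySymmetric f)
    (x y : D) : f ![x, y] = f ![y, x] :=
  hf _ _ (by simp only [Matrix.range_cons, Matrix.range_empty, Set.union_empty,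
    Set.union_singleton, Set.pair_comm])

theorem swap_not_mem_orbital {D : Type} {G : Subgroup (Equiv.Perm D)} {a b : D} (hab : a ≠ b)
    {f : (Fin 2 → D) → D} (hf : TotallySymmetric f) (hpres : PreservesPairs f (orbital G a b)) :
    (b, a) ∉ orbital G a b := by
  intro hba
  have hmem := hpres ![a, b] ![b, a] (Fin.forall_fin_two.2 ⟨mem_orbital_self a b, hba⟩)
  exact fst_ne_snd_of_mem_orbital hab hmem (hf.apply_swap a b)

section Ordered

variable {K : Type} [Field K] [LinearOrder K] [IsStrictOrderedRing K]

def affineOrderIso {p q r s : K} (hpq : p < q) (hrs : r < s) : K ≃o K :=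
  (OrderIso.addRight (-p)).trans
    ((OrderIso.mulRight₀ _ (div_pos (sub_pos.2 hrs) (sub_pos.2 hpq))).trans (OrderIso.addRight r))

theorem affineOrderIso_apply {p q r s : K} (hpq : p < q) (hrs : r < s) (x : K) :
    affineOrderIso hpq hrs x = (x + -p) * ((s - r) / (q - p)) + r :=
  rfl

theorem affineOrderIso_apply_left {p q r s : K} (hpq : p < q) (hrs : r < s) :
    affineOrderIso hpq hrs p = r := by
  simp [affineOrderIso_apply]

theorem affineOrderIso_apply_right {p q r s : K} (hpq : p < q) (hrs : r < s) :
    affineOrderIso hpq hrs q = s := by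
  rw [affineOrderIso_apply, ← sub_eq_add_neg, mul_div_cancel₀ _ (sub_pos.2 hpq).ne', sub_add_cancel]

theorem swap_mem_orbital_of_lt {G : Subgroup (Equiv.Perm K)}
    (hcontains : ∀ g : Equiv.Perm K, StrictMono ⇑g → g ∈ G) {g : Equiv.Perm K} (hg : g ∈ G)
    {a b : K} (hab : a < b) (hgba : g b < g a) : (b, a) ∈ orbital G a b := by
  let e := affineOrderIso hgba hab
  refine ⟨g.trans e.toEquiv, G.mul_mem (hcontains _ e.strictMono) hg, ?_, ?_⟩
  · exact affineOrderIso_apply_right hgba hab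
  · exact affineOrderIso_apply_left hgba hab

end Ordered

/-- Let `G` be a group of permutations of `ℚ` containing all order-preserving
permutations of `(ℚ, <)`, and suppose for every `n ≥ 1` there is a totally symmetric
`n`-ary operation on `ℚ` preserving every orbital of `G`. Then every element of `G`
preserves `<`; that is, `G` is exactly the group `Aut(ℚ; <)` of order-preserving
permutations of `ℚ`. -/
theorem stmt12 (G : Subgroup (Equiv.Perm ℚ))
    (hcontains : ∀ g : Equiv.Perm ℚ, StrictMono ⇑g → g ∈ G)
    (hts : ∀ n : ℕ, 1 ≤ n → ∃ f : (Fin n → ℚ) → ℚ, TotallySymmetric f ∧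
      ∀ a b : ℚ, PreservesPairs f (orbital G a b)) :
    ∀ g : Equiv.Perm ℚ, g ∈ G ↔ StrictMono ⇑g := by
  intro g
  refine ⟨fun hg a b hab => ?_, hcontains g⟩
  by_contra hgab
  have hgba : g b < g a := (not_lt.1 hgab).lt_of_ne (g.injective.ne hab.ne')
  obtain ⟨f, hf, hpres⟩ := hts 2 (by norm_num)
  exact swap_not_mem_orbital hab.ne hf (hpres a b) (swap_mem_orbital_of_lt hcontains hg hab hgba)
end

section
/- Let G be a group of permutations of a set D and let E be a G-invariant equivalence relation on D. Consider the induced action of G on the quotient D/E, where α ∈ G maps the class of x to the class of α(x). Then for every n ≥ 1, the number of orbits of the induced action of G on n-element subsets of D/E is at most the number of orbits of G on n-element subsets of D. -/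
/-- The set of orbits of the action of a group `G` of permutations of `D` on
`n`-element subsets of `D`. -/
def subsetOrbitsOf {D : Type} (G : Subgroup (Equiv.Perm D)) (n : ℕ) :
    Set (Set (Set D)) :=
  {O | ∃ A : Set D, A.Finite ∧ A.ncard = n ∧ O = {B | ∃ g ∈ G, g '' A = B}}

/-- The set of orbits of the induced action of `G` on `n`-element subsets of the
quotient `D/E`, where the permutation induced by `g` maps the class of `x` to the class
of `g x`. -/
def quotSubsetOrbitsOf {D : Type} (G : Subgroup (Equiv.Perm D)) (s : Setoid D) (n : ℕ) :
    Set (Set (Set (Quotient s))) :=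
  {O | ∃ A : Set (Quotient s), A.Finite ∧ A.ncard = n ∧
    O = {B | ∃ g ∈ G,
      (fun x : D => (Quotient.mk s (g x))) '' {x : D | Quotient.mk s x ∈ A} = B}}

/-!
Lift a finite set `A` of classes to the set `Quotient.out '' A` of representatives, which has the
same size. Because `G` respects the classes, the induced orbit of `A` is the image, under
`Set.image (Quotient.mk s)`, of the `G`-orbit of this lift. Hence the induced orbits on
`n`-subsets of `D/E` are among the images of the orbits on `n`-subsets of `D`, and there are at
most as many of them.
-/

theorem image_mk_comp_preimage_mk_eq {D : Type} {s : Setoid D} {f : D → D}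
    (hf : ∀ x y : D, s.r x y → s.r (f x) (f y)) (A : Set (Quotient s)) :
    (fun x : D => Quotient.mk s (f x)) '' {x : D | Quotient.mk s x ∈ A}
      = Quotient.mk s '' (f '' (Quotient.out '' A)) := by
  ext b
  constructor
  · rintro ⟨x, hx, rfl⟩
    refine ⟨f (Quotient.mk s x).out, ⟨_, ⟨_, hx, rfl⟩, rfl⟩, ?_⟩
    exact Quotient.sound (hf _ _ (Quotient.exact (Quotient.out_eq _)))
  · rintro ⟨_, ⟨_, ⟨a, ha, rfl⟩, rfl⟩, rfl⟩
    exact ⟨a.out, by simpa using ha, rfl⟩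

theorem quotOrbit_eq_image_orbit_out {D : Type} {G : Subgroup (Equiv.Perm D)} {s : Setoid D}
    (hinv : ∀ g ∈ G, ∀ x y : D, s.r x y → s.r (g x) (g y)) (A : Set (Quotient s)) :
    {B | ∃ g ∈ G, (fun x : D => Quotient.mk s (g x)) '' {x : D | Quotient.mk s x ∈ A} = B}
      = Set.image (Quotient.mk s) '' {B | ∃ g ∈ G, g '' (Quotient.out '' A) = B} := by
  ext B
  constructor
  · rintro ⟨g, hg, rfl⟩
    exact ⟨_, ⟨g, hg, rfl⟩, (image_mk_comp_preimage_mk_eq (hinv g hg) A).symm⟩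
  · rintro ⟨_, ⟨g, hg, rfl⟩, rfl⟩
    exact ⟨g, hg, image_mk_comp_preimage_mk_eq (hinv g hg) A⟩

theorem quotSubsetOrbitsOf_subset_image {D : Type} {G : Subgroup (Equiv.Perm D)} {s : Setoid D}
    (hinv : ∀ g ∈ G, ∀ x y : D, s.r x y → s.r (g x) (g y)) (n : ℕ) :
    quotSubsetOrbitsOf G s n
      ⊆ (fun O => Set.image (Quotient.mk s) '' O) '' subsetOrbitsOf G n := by
  rintro _ ⟨A, hfin, hcard, rfl⟩
  refine ⟨_, ⟨Quotient.out '' A, hfin.image _, ?_, rfl⟩,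
    (quotOrbit_eq_image_orbit_out hinv A).symm⟩
  rwa [Set.ncard_image_of_injective _ Quotient.out_injective]

theorem stmt13_general {D : Type} (G : Subgroup (Equiv.Perm D)) (s : Setoid D)
    (hinv : ∀ g ∈ G, ∀ x y : D, s.r x y → s.r (g x) (g y))
    (n : ℕ) :
    Cardinal.mk ↥(quotSubsetOrbitsOf G s n) ≤ Cardinal.mk ↥(subsetOrbitsOf G n) :=
  (Cardinal.mk_le_mk_of_subset (quotSubsetOrbitsOf_subset_image hinv n)).trans
    Cardinal.mk_image_le

/-- If `E` is a `G`-invariant equivalence relation on `D`, then for every `n ≥ 1` the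
number of orbits of the induced action of `G` on `n`-element subsets of `D/E` is at most
the number of orbits of `G` on `n`-element subsets of `D`. -/
theorem stmt13 {D : Type} (G : Subgroup (Equiv.Perm D)) (s : Setoid D)
    (hinv : ∀ g ∈ G, ∀ x y : D, s.r x y → s.r (g x) (g y))
    (n : ℕ) (hn : 1 ≤ n) :
    Cardinal.mk ↥(quotSubsetOrbitsOf G s n) ≤ Cardinal.mk ↥(subsetOrbitsOf G n) :=
  stmt13_general G s hinv n
end

section
/- Let Γ_1 be the relational structure with domain ℚ² and, for each pair ρ, σ ∈ {<, =, >}, a binary relation R_{ρ,σ} defined by R_{ρ,σ}((x_1,y_1),(x_2,y_2)) iff ρ(x_1,x_2) and σ(y_1,y_2). Then for every n ≥ 1, the automorphism group of Γ_1 has at least 2^{n−1} orbits in its action on n-element subsets of ℚ². -/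
/-- The comparison relation on `ℚ` named by `ρ ∈ {<, =, >}`. -/
def relOf : Ordering → ℚ → ℚ → Prop
  | .lt => (· < ·)
  | .eq => (· = ·)
  | .gt => (· > ·)

/-- `e` is an automorphism of the structure `Γ₁` with domain `ℚ²` and the nine binary
relations `R_{ρ,σ}((x₁,y₁),(x₂,y₂)) ⟺ ρ(x₁,x₂) ∧ σ(y₁,y₂)` for `ρ, σ ∈ {<, =, >}`. -/
def IsAutoGamma1 (e : ℚ × ℚ ≃ ℚ × ℚ) : Prop :=
  ∀ (ρ σ : Ordering) (p q : ℚ × ℚ),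
    (relOf ρ p.1 q.1 ∧ relOf σ p.2 q.2) ↔
      (relOf ρ (e p).1 (e q).1 ∧ relOf σ (e p).2 (e q).2)

/-!
Under an automorphism of `Γ₁` both coordinate orders are preserved. Encode `i < 2 ^ (n - 1)`
by the lattice path `(k, y_k)`, `k < n`, whose `k`-th step goes up or down according to the
`k`-th bit of `i`. Ordered by first coordinate, the points of one path must go to the points
of another in order, so the up/down pattern of the steps, and with it `i`, is an invariant of
the orbit.
-/

open Set

lemma exists_relOf (a b : ℚ) : ∃ σ, relOf σ a b := by
  rcases lt_trichotomy a b with h | h | h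
  · exact ⟨.lt, h⟩
  · exact ⟨.eq, h⟩
  · exact ⟨.gt, h⟩

namespace IsAutoGamma1

variable {e : ℚ × ℚ ≃ ℚ × ℚ} (he : IsAutoGamma1 e)
include he

lemma fst_lt_iff {p q : ℚ × ℚ} : (e p).1 < (e q).1 ↔ p.1 < q.1 := by
  constructor
  · intro h
    obtain ⟨σ, hσ⟩ := exists_relOf (e p).2 (e q).2
    exact ((he .lt σ p q).2 ⟨h, hσ⟩).1
  · intro h
    obtain ⟨σ, hσ⟩ := exists_relOf p.2 q.2
    exact ((he .lt σ p q).1 ⟨h, hσ⟩).1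

lemma snd_lt_iff {p q : ℚ × ℚ} : (e p).2 < (e q).2 ↔ p.2 < q.2 := by
  constructor
  · intro h
    obtain ⟨ρ, hρ⟩ := exists_relOf (e p).1 (e q).1
    exact ((he ρ .lt p q).2 ⟨hρ, h⟩).2
  · intro h
    obtain ⟨ρ, hρ⟩ := exists_relOf p.1 q.1
    exact ((he ρ .lt p q).1 ⟨hρ, h⟩).2

lemma comp_eq_of_image_range_eq {ι : Type*} [LinearOrder ι] [WellFoundedLT ι]
    {f g : ι → ℚ × ℚ} (hf : StrictMono fun k => (f k).1) (hg : StrictMono fun k => (g k).1)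
    (himg : e '' range f = range g) : e ∘ f = g := by
  -- increasing first coordinates make both families strictly monotone for the lexicographic
  -- order, and such a family is determined by its range
  have toLex_strictMono {u : ι → ℚ × ℚ} (hu : StrictMono fun k => (u k).1) :
      StrictMono (toLex ∘ u) :=
    fun a b hab => Prod.Lex.toLex_lt_toLex.2 (Or.inl (hu hab))
  have hef : StrictMono fun k => ((e ∘ f) k).1 := fun a b hab => (he.fst_lt_iff).2 (hf hab)
  have hlex : toLex ∘ (e ∘ f) = toLex ∘ g :=
    ((toLex_strictMono hef).range_inj (toLex_strictMono hg)).1 <| by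
      rw [range_comp, range_comp, range_comp, himg]
  exact funext fun k => toLex.injective (congrFun hlex k)

end IsAutoGamma1

def bitWalk (i k : ℕ) : ℚ := ∑ j ∈ Finset.range k, if i.testBit j then 1 else -1

lemma bitWalk_lt_succ_iff (i k : ℕ) : bitWalk i k < bitWalk i (k + 1) ↔ i.testBit k = true := by
  rw [bitWalk, bitWalk, Finset.sum_range_succ]
  split_ifs with h <;> simp [h]

def bitWalkPoints (n i : ℕ) (k : Fin n) : ℚ × ℚ := ((k : ℚ), bitWalk i k)

lemma strictMono_fst_bitWalkPoints (n i : ℕ) : StrictMono fun k => (bitWalkPoints n i k).1 :=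
  fun _ _ hab => by simpa [bitWalkPoints] using hab

lemma ncard_range_bitWalkPoints (n i : ℕ) : (range (bitWalkPoints n i)).ncard = n := by
  have hinj : Function.Injective (bitWalkPoints n i) :=
    fun _ _ h => (strictMono_fst_bitWalkPoints n i).injective (congrArg Prod.fst h)
  rw [ncard_range_of_injective hinj, Nat.card_fin]

lemma IsAutoGamma1.testBit_eq_of_image_range_eq {e : ℚ × ℚ ≃ ℚ × ℚ}
    (he : IsAutoGamma1 e) {n i j m : ℕ}
    (himg : e '' range (bitWalkPoints n i) = range (bitWalkPoints n j))
    (hm : m + 1 < n) : i.testBit m = j.testBit m := by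
  have hcomp := he.comp_eq_of_image_range_eq (strictMono_fst_bitWalkPoints n i)
    (strictMono_fst_bitWalkPoints n j) himg
  have hstep := he.snd_lt_iff (p := bitWalkPoints n i ⟨m, by omega⟩)
    (q := bitWalkPoints n i ⟨m + 1, hm⟩)
  rw [← Function.comp_apply (f := e), ← Function.comp_apply (f := e), hcomp] at hstep
  simp only [bitWalkPoints, bitWalk_lt_succ_iff] at hstep
  exact Bool.eq_iff_iff.2 hstep.symm

lemma Nat.eq_of_testBit_eq_of_lt_two_pow {a b k : ℕ} (ha : a < 2 ^ k) (hb : b < 2 ^ k)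
    (h : ∀ m < k, a.testBit m = b.testBit m) : a = b := by
  refine Nat.eq_of_testBit_eq fun m => ?_
  rcases lt_or_ge m k with hm | hm
  · exact h m hm
  · have hpow : 2 ^ k ≤ 2 ^ m := Nat.pow_le_pow_right two_pos hm
    rw [Nat.testBit_lt_two_pow (ha.trans_le hpow), Nat.testBit_lt_two_pow (hb.trans_le hpow)]

theorem stmt16_general (n : ℕ) :
    ∃ S : Fin (2 ^ (n - 1)) → Set (ℚ × ℚ),
      (∀ i, (S i).Finite ∧ (S i).ncard = n) ∧
      ∀ i j, (∃ e : ℚ × ℚ ≃ ℚ × ℚ, IsAutoGamma1 e ∧ e '' S i = S j) → i = j := by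
  refine ⟨fun i => range (bitWalkPoints n i),
    fun i => ⟨finite_range _, ncard_range_bitWalkPoints n i⟩, ?_⟩
  rintro i j ⟨e, he, himg⟩
  exact Fin.ext <| Nat.eq_of_testBit_eq_of_lt_two_pow i.isLt j.isLt
    fun m hm => he.testBit_eq_of_image_range_eq himg (by omega)

/-- For every `n ≥ 1`, the automorphism group of `Γ₁` has at least `2 ^ (n - 1)` orbits
in its action on `n`-element subsets of `ℚ²`: there are `2 ^ (n - 1)` many `n`-element
subsets that lie pairwise in distinct orbits. -/
theorem stmt16 (n : ℕ) (hn : 1 ≤ n) :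
    ∃ S : Fin (2 ^ (n - 1)) → Set (ℚ × ℚ),
      (∀ i, (S i).Finite ∧ (S i).ncard = n) ∧
      ∀ i j, (∃ e : ℚ × ℚ ≃ ℚ × ℚ, IsAutoGamma1 e ∧ e '' S i = S j) → i = j :=
  stmt16_general n
end
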